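/- For every real x > 1, Li(x) + ∫_x^∞ 1/(t·(t² - 1)·log t) dt = P.V. ∫_{-2}^1 x^σ/σ dσ + Σ_{n=2}^∞ ∫_{2n·log x}^∞ e^{-u}/u du, where P.V. ∫_{-2}^1 x^σ/σ dσ := lim_{ε→0⁺} ( ∫_{-2}^{-ε} x^σ/σ dσ + ∫_{ε}^{1} x^σ/σ dσ ) and Li(x) := lim_{ε→0⁺} ( ∫_0^{1-ε} dt/log t + ∫_{1+ε}^{x} dt/log t ). -/

import Mathlib

open Filter Topology

/-!
Substituting `t = e^v` in `Li(x)` and `σ = v / log x` in the principal value turns both into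
principal values of `∫ e^v / v dv`: over `(-∞, log x]` with the asymmetric cut
`(log (1 - ε), log (1 + ε))`, and over `[-2 log x, log x]` with a symmetric cut. Writing
`f(v) / v = f(0) / v + dslope f 0 v`, such a principal value exists for every cut `(-A, B)` with
`A / B → 1`, so both limits exist and differ by `∫_{-∞}^{-2 log x} e^v / v dv = -Γ(0, 2 log x)`.
Finally `t = e^y` and `1 / (e^{2y} - 1) = ∑_{k ≥ 1} e^{-2ky}` give
`∫_x^∞ dt / (t (t² - 1) log t) = ∑_{n ≥ 1} Γ(0, 2n log x)`, whose first term is that difference.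
-/

open Set MeasureTheory Real

/-- `Γ(0, a)`, the exponential integral `E₁(a)`. -/
noncomputable def expIntegralE1 (a : ℝ) : ℝ := ∫ u in Ioi a, exp (-u) / u

lemma integrableOn_exp_neg_mul_div_self {a q : ℝ} (ha : 0 < a) (hq : 0 < q) :
    IntegrableOn (fun y => exp (-q * y) / y) (Ioi a) := by
  refine ((exp_neg_integrableOn_Ioi a hq).div_const a).mono'
    ((by fun_prop : Measurable fun y => exp (-q * y) / y).aestronglyMeasurable) ?_
  filter_upwards [ae_restrict_mem measurableSet_Ioi] with y (hy : a < y)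
  rw [norm_of_nonneg (div_nonneg (exp_pos _).le (ha.trans hy).le)]
  exact div_le_div_of_nonneg_left (exp_pos _).le ha hy.le

lemma integral_exp_neg_mul_div_self (a : ℝ) {q : ℝ} (hq : 0 < q) :
    ∫ y in Ioi a, exp (-q * y) / y = expIntegralE1 (q * a) := by
  rw [expIntegralE1, ← integral_comp_mul_left_Ioi' _ a hq, smul_eq_mul, ← integral_const_mul]
  congr 1 with y
  rw [neg_mul, mul_div_assoc', mul_div_mul_left _ _ hq.ne']

lemma expIntegralE1_nonneg {a : ℝ} (ha : 0 < a) : 0 ≤ expIntegralE1 a :=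
  setIntegral_nonneg measurableSet_Ioi fun u (hu : a < u) =>
    div_nonneg (exp_pos _).le (ha.trans hu).le

lemma expIntegralE1_le {a₀ a : ℝ} (ha₀ : 0 < a₀) (h : a₀ ≤ a) :
    expIntegralE1 a ≤ exp (-a) / a₀ := by
  have hint : IntegrableOn (fun u => exp (-u) / u) (Ioi a) := by
    simpa using integrableOn_exp_neg_mul_div_self (ha₀.trans_le h) one_pos
  calc expIntegralE1 a ≤ ∫ u in Ioi a, exp (-u) / a₀ :=
        setIntegral_mono_on hint ((integrableOn_exp_neg_Ioi a).div_const a₀) measurableSet_Ioi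
          fun u (hu : a < u) => div_le_div_of_nonneg_left (exp_pos _).le ha₀ (h.trans hu.le)
    _ = exp (-a) / a₀ := by rw [integral_div, integral_exp_neg_Ioi]

lemma summable_expIntegralE1 {c : ℝ} (hc : 0 < c) :
    Summable fun k : ℕ => expIntegralE1 (2 * (k + 1) * c) := by
  have hgeom : Summable fun k : ℕ => exp (k * (-2 * c)) * (exp (-2 * c) / (2 * c)) :=
    (summable_exp_nat_mul_iff.mpr (by linarith)).mul_right _
  refine hgeom.of_nonneg_of_le (fun k => expIntegralE1_nonneg (by positivity)) fun k => ?_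
  calc expIntegralE1 (2 * (k + 1) * c) ≤ exp (-(2 * (k + 1) * c)) / (2 * c) :=
        expIntegralE1_le (by positivity) (by nlinarith [k.cast_nonneg (α := ℝ)])
    _ = exp (k * (-2 * c)) * (exp (-2 * c) / (2 * c)) := by
        rw [mul_div_assoc', ← exp_add]; ring_nf

lemma hasSum_exp_neg_mul_div_self {y : ℝ} (hy : 0 < y) :
    HasSum (fun k : ℕ => exp (-(2 * (k + 1)) * y) / y) (1 / (y * (exp (2 * y) - 1))) := by
  have hr : exp (-2 * y) < 1 := exp_lt_one_iff.mpr (by linarith)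
  have hterm : (fun k : ℕ => exp (-(2 * (k + 1)) * y) / y) =
      fun k => exp (-2 * y) ^ k * (exp (-2 * y) / y) := by
    ext k
    rw [mul_div_assoc', ← pow_succ, ← exp_nat_mul]
    push_cast
    ring_nf
  have hvalue : 1 / (y * (exp (2 * y) - 1)) = (1 - exp (-2 * y))⁻¹ * (exp (-2 * y) / y) := by
    have h2y : 1 < exp (2 * y) := one_lt_exp_iff.mpr (by linarith)
    rw [neg_mul, exp_neg]
    field_simp
  rw [hterm, hvalue]
  exact (hasSum_geometric_of_lt_one (exp_pos _).le hr).mul_right _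

theorem hasSum_expIntegralE1 {c : ℝ} (hc : 0 < c) :
    HasSum (fun k : ℕ => expIntegralE1 (2 * (k + 1) * c))
      (∫ y in Ioi c, 1 / (y * (exp (2 * y) - 1))) := by
  set F : ℕ → ℝ → ℝ := fun k y => exp (-(2 * (k + 1)) * y) / y
  have hF_int (k : ℕ) : IntegrableOn (F k) (Ioi c) :=
    integrableOn_exp_neg_mul_div_self hc (by positivity)
  have hF_integral (k : ℕ) : ∫ y in Ioi c, F k y = expIntegralE1 (2 * (k + 1) * c) :=
    integral_exp_neg_mul_div_self c (by positivity)
  have hF_norm (k : ℕ) : ∫ y in Ioi c, ‖F k y‖ = ∫ y in Ioi c, F k y :=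
    setIntegral_congr_fun measurableSet_Ioi fun y (hy : c < y) =>
      norm_of_nonneg (div_nonneg (exp_pos _).le (hc.trans hy).le)
  have hF_tsum : ∫ y in Ioi c, 1 / (y * (exp (2 * y) - 1)) = ∫ y in Ioi c, ∑' k, F k y :=
    setIntegral_congr_fun measurableSet_Ioi fun y (hy : c < y) =>
      (hasSum_exp_neg_mul_div_self (hc.trans hy)).tsum_eq.symm
  rw [hF_tsum]
  simpa only [hF_integral] using hasSum_integral_of_summable_integral_norm hF_int
    (by simpa only [hF_norm, hF_integral] using summable_expIntegralE1 hc)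

lemma integral_Ioi_one_div_mul_sq_sub_one_mul_log {x : ℝ} (hx : 0 < x) :
    ∫ t in Ioi x, 1 / (t * (t ^ 2 - 1) * log t) =
      ∫ y in Ioi (log x), 1 / (y * (exp (2 * y) - 1)) := by
  rw [← integral_comp_log_Ioi _ hx]
  refine setIntegral_congr_fun measurableSet_Ioi fun t (ht : x < t) => ?_
  have hexp : exp (2 * log t) = t ^ 2 := by
    rw [two_mul, exp_add, exp_log (hx.trans ht), sq]
  rw [smul_eq_mul, hexp]
  simp only [one_div, mul_inv]
  ring

/-- The value of `P.V. ∫_a^b f(v) / v dv` for `a < 0 < b`. -/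
noncomputable def pvIntegralDivSelf (f : ℝ → ℝ) (a b : ℝ) : ℝ :=
  f 0 * log (b / -a) + ∫ v in a..b, dslope f 0 v

lemma continuous_dslope {𝕜 E : Type*} [NontriviallyNormedField 𝕜] [NormedAddCommGroup E]
    [NormedSpace 𝕜 E] {f : 𝕜 → E} {a : 𝕜} (hf : Continuous f) (hfa : DifferentiableAt 𝕜 f a) :
    Continuous (dslope f a) :=
  continuousOn_univ.mp ((continuousOn_dslope univ_mem).mpr ⟨hf.continuousOn, hfa⟩)

lemma integral_div_self_eq_mul_log_add_integral_dslope {f : ℝ → ℝ} (hf : Continuous f)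
    (hf0 : DifferentiableAt ℝ f 0) {s t : ℝ} (h : (0 : ℝ) ∉ uIcc s t) :
    ∫ v in s..t, f v / v = f 0 * log (t / s) + ∫ v in s..t, dslope f 0 v := by
  have hD := continuous_dslope hf hf0
  have hinv : IntervalIntegrable (fun v : ℝ => v⁻¹) volume s t :=
    intervalIntegral.intervalIntegrable_inv (fun v hv h0 => h (h0 ▸ hv)) continuousOn_id
  rw [← integral_inv h, ← intervalIntegral.integral_const_mul,
    ← intervalIntegral.integral_add (hinv.const_mul _) (hD.intervalIntegrable _ _)]
  refine intervalIntegral.integral_congr fun v hv => ?_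
  have hv0 : v ≠ 0 := fun h0 => h (h0 ▸ hv)
  simp only [dslope_of_ne _ hv0, slope_def_field, sub_zero]
  field_simp
  ring

theorem tendsto_integral_div_self_add_integral_div_self {f : ℝ → ℝ} (hf : Continuous f)
    (hf0 : DifferentiableAt ℝ f 0) {a b : ℝ} (ha : a < 0) (hb : 0 < b) {α : Type*}
    {l : Filter α} {A B : α → ℝ} (hA : Tendsto A l (𝓝[>] 0)) (hB : Tendsto B l (𝓝[>] 0))
    (hAB : Tendsto (fun ε => A ε / B ε) l (𝓝 1)) :
    Tendsto (fun ε => (∫ v in a..-A ε, f v / v) + ∫ v in B ε..b, f v / v) l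
      (𝓝 (pvIntegralDivSelf f a b)) := by
  have hD := continuous_dslope hf hf0
  have hDint (s t : ℝ) : IntervalIntegrable (dslope f 0) volume s t := hD.intervalIntegrable _ _
  set F : ℝ → ℝ := fun t => ∫ v in 0..t, dslope f 0 v
  have hF : Continuous F := intervalIntegral.continuous_primitive hDint 0
  have hA0 := tendsto_nhds_of_tendsto_nhdsWithin hA
  have hB0 := tendsto_nhds_of_tendsto_nhdsWithin hB
  have hlim : Tendsto (fun ε => f 0 * (log (b / -a) + log (A ε / B ε)) +
      ((∫ v in a..b, dslope f 0 v) - (F (B ε) - F (-A ε)))) l (𝓝 (pvIntegralDivSelf f a b)) := by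
    have := ((hAB.log one_ne_zero).const_add (log (b / -a))).const_mul (f 0) |>.add
      (Tendsto.const_sub (∫ v in a..b, dslope f 0 v)
        (((hF.tendsto 0).comp hB0).sub ((hF.tendsto 0).comp (by simpa using hA0.neg))))
    simpa [pvIntegralDivSelf, F] using this
  refine hlim.congr' ?_
  filter_upwards [tendsto_nhdsWithin_iff.mp hA |>.2, tendsto_nhdsWithin_iff.mp hB |>.2]
    with ε (hAε : 0 < A ε) (hBε : 0 < B ε)
  rw [integral_div_self_eq_mul_log_add_integral_dslope hf hf0
      (notMem_uIcc_of_gt ha (neg_neg_of_pos hAε)),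
    integral_div_self_eq_mul_log_add_integral_dslope hf hf0 (notMem_uIcc_of_lt hBε hb),
    intervalIntegral.integral_interval_sub_left (hDint _ _) (hDint _ _),
    ← intervalIntegral.integral_add_adjacent_intervals (hDint a (-A ε)) (hDint _ b),
    ← intervalIntegral.integral_add_adjacent_intervals (hDint (-A ε) (B ε)) (hDint _ b),
    log_div (by linarith) ha.ne, log_div hb.ne' (by linarith), log_div hb.ne' hBε.ne',
    log_div hAε.ne' hBε.ne', log_neg_eq_log, log_neg_eq_log]
  ring

lemma integral_rpow_div_self {x : ℝ} (hx : 0 < x) (hx1 : x ≠ 1) (s t : ℝ) :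
    ∫ σ in s..t, x ^ σ / σ = ∫ v in log x * s..log x * t, exp v / v := by
  rw [← intervalIntegral.smul_integral_comp_mul_left, smul_eq_mul,
    ← intervalIntegral.integral_const_mul]
  congr 1 with σ
  rw [rpow_def_of_pos hx, mul_div_assoc',
    mul_div_mul_left _ _ (log_ne_zero_of_pos_of_ne_one hx hx1)]

theorem tendsto_pv_rpow_div_self {x : ℝ} (hx : 1 < x) {a b : ℝ} (ha : a < 0) (hb : 0 < b) :
    Tendsto (fun ε => (∫ σ in a..-ε, x ^ σ / σ) + ∫ σ in ε..b, x ^ σ / σ) (𝓝[>] 0)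
      (𝓝 (pvIntegralDivSelf exp (log x * a) (log x * b))) := by
  have hc : 0 < log x := log_pos hx
  have hcε : Tendsto (fun ε => log x * ε) (𝓝[>] 0) (𝓝[>] 0) :=
    tendsto_nhdsWithin_iff.mpr
      ⟨((continuous_const_mul (log x)).tendsto' 0 0 (mul_zero _)).mono_left nhdsWithin_le_nhds,
      eventually_nhdsWithin_of_forall fun ε (hε : 0 < ε) => mul_pos hc hε⟩
  have hratio : Tendsto (fun ε => log x * ε / (log x * ε)) (𝓝[>] 0) (𝓝 1) :=
    tendsto_const_nhds.congr' <| eventually_nhdsWithin_of_forall fun ε (hε : 0 < ε) =>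
      (div_self (mul_pos hc hε).ne').symm
  convert tendsto_integral_div_self_add_integral_div_self continuous_exp differentiableAt_exp
    (mul_neg_of_pos_of_neg hc ha) (mul_pos hc hb) hcε hcε hratio using 2 with ε
  rw [integral_rpow_div_self (by linarith) hx.ne', integral_rpow_div_self (by linarith) hx.ne',
    mul_neg]

lemma tendsto_log_one_add_div_self : Tendsto (fun t => log (1 + t) / t) (𝓝[≠] 0) (𝓝 1) := by
  simpa [div_eq_inv_mul] using (hasDerivAt_log one_ne_zero).tendsto_slope_zero

lemma tendsto_neg_log_one_sub_div_log_one_add :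
    Tendsto (fun ε => -log (1 - ε) / log (1 + ε)) (𝓝[>] 0) (𝓝 1) := by
  have hneg : Tendsto (fun ε : ℝ => -ε) (𝓝[>] 0) (𝓝[≠] 0) :=
    tendsto_nhdsWithin_iff.mpr
      ⟨(continuous_neg.tendsto' 0 0 neg_zero).mono_left nhdsWithin_le_nhds,
      eventually_nhdsWithin_of_forall fun ε (hε : 0 < ε) => neg_ne_zero.mpr hε.ne'⟩
  have h := (tendsto_log_one_add_div_self.comp hneg).div
    (tendsto_log_one_add_div_self.mono_left (nhdsGT_le_nhdsNE 0)) one_ne_zero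
  rw [div_one] at h
  refine h.congr' (eventually_nhdsWithin_of_forall fun ε (hε : 0 < ε) => ?_)
  have hlog : 0 < log (1 + ε) := log_pos (by linarith)
  simp only [Pi.div_apply, Function.comp_apply, ← sub_eq_add_neg]
  field_simp

lemma tendsto_log_one_add_nhdsGT : Tendsto (fun ε => log (1 + ε)) (𝓝[>] 0) (𝓝[>] 0) := by
  refine tendsto_nhdsWithin_iff.mpr ⟨?_, eventually_nhdsWithin_of_forall fun ε (hε : 0 < ε) =>
    log_pos (by linarith)⟩
  simpa using ((continuousAt_const.add continuousAt_id).log (by norm_num) :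
    ContinuousAt (fun ε : ℝ => log (1 + ε)) 0).tendsto.mono_left nhdsWithin_le_nhds

lemma tendsto_neg_log_one_sub_nhdsGT : Tendsto (fun ε => -log (1 - ε)) (𝓝[>] 0) (𝓝[>] 0) := by
  refine tendsto_nhdsWithin_iff.mpr ⟨?_, ?_⟩
  · simpa using ((continuousAt_const.sub continuousAt_id).log (by norm_num) :
      ContinuousAt (fun ε : ℝ => log (1 - ε)) 0).tendsto.neg.mono_left nhdsWithin_le_nhds
  · filter_upwards [Ioo_mem_nhdsGT one_pos] with ε ⟨h0, h1⟩
    exact neg_pos.mpr (log_neg (by linarith) (by linarith))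

lemma integral_zero_exp_neg_one_div_log (a : ℝ) :
    ∫ t in (0 : ℝ)..exp (-a), 1 / log t = -expIntegralE1 a := by
  rw [intervalIntegral.integral_of_le (exp_pos _).le, ← image_exp_Iic,
    integral_image_eq_integral_abs_deriv_smul measurableSet_Iic
      (fun v _ => (hasDerivAt_exp v).hasDerivWithinAt) exp_injective.injOn,
    ← integral_comp_neg_Ioi, expIntegralE1, ← integral_neg]
  congr 1 with u
  rw [abs_of_pos (exp_pos _), smul_eq_mul, log_exp, div_neg, mul_neg, mul_one_div]

lemma intervalIntegrable_zero_exp_neg_one_div_log {a : ℝ} (ha : 0 < a) :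
    IntervalIntegrable (fun t => 1 / log t) volume 0 (exp (-a)) := by
  rw [intervalIntegrable_iff_integrableOn_Ioc_of_le (exp_pos _).le]
  refine Measure.integrableOn_of_bounded (M := 1 / a) measure_Ioc_lt_top.ne
    (by fun_prop : Measurable fun t => 1 / log t).aestronglyMeasurable ?_
  filter_upwards [ae_restrict_mem measurableSet_Ioc] with t ⟨ht0, hta⟩
  have hlog : log t ≤ -a := (log_le_iff_le_exp ht0).mpr hta
  rw [norm_div, norm_one, norm_of_nonpos (by linarith)]
  exact one_div_le_one_div_of_le ha (by linarith)

lemma continuousOn_one_div_log_image_exp {s t : ℝ} (h : (0 : ℝ) ∉ uIcc s t) :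
    ContinuousOn (fun u => 1 / log u) (exp '' uIcc s t) := by
  rintro _ ⟨v, hv, rfl⟩
  refine (continuousAt_const.div (continuousAt_log (exp_pos v).ne') ?_).continuousWithinAt
  rw [log_exp]
  exact fun h0 => h (h0 ▸ hv)

lemma integral_exp_exp_one_div_log {s t : ℝ} (h : (0 : ℝ) ∉ uIcc s t) :
    ∫ u in exp s..exp t, 1 / log u = ∫ v in s..t, exp v / v := by
  rw [← intervalIntegral.integral_comp_mul_deriv' (fun v _ => hasDerivAt_exp v)
    continuous_exp.continuousOn (continuousOn_one_div_log_image_exp h)]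
  congr 1 with v
  rw [Function.comp_apply, log_exp, one_div_mul_eq_div]

theorem tendsto_logIntegral_principalValue {x : ℝ} (hx : 1 < x) {a : ℝ} (ha : 0 < a) :
    Tendsto (fun ε => (∫ t in (0 : ℝ)..(1 - ε), 1 / log t) + ∫ t in (1 + ε)..x, 1 / log t)
      (𝓝[>] 0) (𝓝 (pvIntegralDivSelf exp (-a) (log x) - expIntegralE1 a)) := by
  have hlim := (tendsto_integral_div_self_add_integral_div_self continuous_exp
    differentiableAt_exp (neg_neg_of_pos ha) (log_pos hx) tendsto_neg_log_one_sub_nhdsGT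
    tendsto_log_one_add_nhdsGT tendsto_neg_log_one_sub_div_log_one_add).sub_const
      (expIntegralE1 a)
  refine hlim.congr' ?_
  filter_upwards [Ioo_mem_nhdsGT one_pos] with ε ⟨h0, h1⟩
  have hlow : log (1 - ε) < 0 := log_neg (by linarith) (by linarith)
  have hup : 0 < log (1 + ε) := log_pos (by linarith)
  have hlow_mem : (0 : ℝ) ∉ uIcc (-a) (log (1 - ε)) := notMem_uIcc_of_gt (by linarith) hlow
  have hup_mem : (0 : ℝ) ∉ uIcc (log (1 + ε)) (log x) := notMem_uIcc_of_lt hup (log_pos hx)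
  have hlower : ∫ t in (0 : ℝ)..(1 - ε), 1 / log t =
      -expIntegralE1 a + ∫ v in -a..log (1 - ε), exp v / v := by
    have hcont := continuousOn_one_div_log_image_exp hlow_mem
    rw [image_exp_uIcc, exp_log (by linarith)] at hcont
    rw [← integral_zero_exp_neg_one_div_log, ← integral_exp_exp_one_div_log hlow_mem,
      exp_log (by linarith), intervalIntegral.integral_add_adjacent_intervals
        (intervalIntegrable_zero_exp_neg_one_div_log ha) hcont.intervalIntegrable]
  have hupper : ∫ t in (1 + ε)..x, 1 / log t = ∫ v in log (1 + ε)..log x, exp v / v := by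
    rw [← integral_exp_exp_one_div_log hup_mem, exp_log (by linarith), exp_log (by linarith)]
  rw [hlower, hupper, neg_neg]
  ring

/-- For `x > 1`,
`Li(x) + ∫_x^∞ dt/(t (t²-1) log t) = P.V. ∫_{-2}^1 x^σ/σ dσ + ∑_{n=2}^∞ Γ(0, 2n log x)`,
where `Li(x)` and the principal value are the stated limits `L` and `P`. -/
theorem li_add_integral_eq_pv_add_sum (x : ℝ) (hx : 1 < x) :
    ∃ L P : ℝ,
      Tendsto (fun ε : ℝ =>
          (∫ t in (0 : ℝ)..(1 - ε), 1 / Real.log t) +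
            ∫ t in (1 + ε)..x, 1 / Real.log t)
        (𝓝[>] 0) (𝓝 L) ∧
      Tendsto (fun ε : ℝ =>
          (∫ σ in (-2 : ℝ)..(-ε), x ^ σ / σ) + ∫ σ in ε..(1 : ℝ), x ^ σ / σ)
        (𝓝[>] 0) (𝓝 P) ∧
      L + (∫ t in Set.Ioi x, 1 / (t * (t ^ 2 - 1) * Real.log t)) =
        P + ∑' n : ℕ,
          ∫ u in Set.Ioi (2 * ((n : ℝ) + 2) * Real.log x), Real.exp (-u) / u := by
  have hc : 0 < log x := log_pos hx
  have hseries := hasSum_expIntegralE1 hc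
  refine ⟨pvIntegralDivSelf exp (-(2 * log x)) (log x) - expIntegralE1 (2 * log x),
    pvIntegralDivSelf exp (-(2 * log x)) (log x),
    tendsto_logIntegral_principalValue hx (by positivity), ?_, ?_⟩
  · convert tendsto_pv_rpow_div_self hx (a := -2) (b := 1) (by norm_num) one_pos using 3 <;> ring
  · have hshift : (fun n : ℕ => expIntegralE1 (2 * ((n + 1 : ℕ) + 1) * log x)) =
        fun n : ℕ => expIntegralE1 (2 * ((n : ℝ) + 2) * log x) := by
      ext n
      push_cast
      ring_nf
    rw [integral_Ioi_one_div_mul_sq_sub_one_mul_log (by linarith), ← hseries.tsum_eq,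
      hseries.summable.tsum_eq_zero_add, hshift]
    simp only [expIntegralE1, CharP.cast_eq_zero, zero_add, mul_one]
    ring
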